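/- arXiv:math-ph/0503009 — 2 statements merged into one kernel-verified Lean document; each statement's English description precedes it below -/
import Mathlib

section
/- Let d ≥ 1, r ≥ 1, ε > 0, C_V > 0 and C_a > 0 be real numbers and let V : ℝ^d → ℝ be twice continuously differentiable such that for all x ∈ ℝ^d: |∇V(x)| ≤ C_V ε (1+ε²|x|²)^((r−1)/2) and |ξ · (Hess V(x)) ξ| ≤ C_V ε² (1+ε²|x|²)^((r−2)/2) |ξ|² for all ξ ∈ ℝ^d. Then for every a ∈ ℝ^d with ε|a| ≤ C_a and every x ∈ ℝ^d, V(x+a) − V(a) − ∇V(a)·x ≤ C₁ (1 + ε²|x|² (1+ε²|x|²)^((r−2)/2)), where C₁ := 2 C_V (2+2C_a²)^((r−1)/2). -/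
/-!
On the segment from `a` to `a + x` the weight `1 + ε²‖y‖²` is at most
`(2 + 2 C_a²) (1 + ε²‖x‖²)`, because `ε‖a‖ ≤ C_a`. For `r ≤ 2` the mean value inequality bounds
the remainder by twice the gradient bound times `‖x‖`, and
`s (1 + s²)^((r-1)/2) ≤ 1 + s² (1 + s²)^((r-2)/2)` as the exponent `(r-2)/2` is nonpositive.
For `r ≥ 2` the second-order mean value inequality bounds it by the Hessian bound times `‖x‖²`.
-/

open Set Real

section TaylorRemainder

variable {F : Type*} [NormedAddCommGroup F] [NormedSpace ℝ F]

theorem norm_sub_sub_deriv_le_two_mul {g g' : ℝ → F} {M : ℝ}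
    (hg : ∀ t, HasDerivAt g (g' t) t) (hM : ∀ t ∈ Icc (0 : ℝ) 1, ‖g' t‖ ≤ M) :
    ‖g 1 - g 0 - g' 0‖ ≤ 2 * M := by
  have hinc : ‖g 1 - g 0‖ ≤ M :=
    norm_image_sub_le_of_norm_deriv_le_segment_01' (fun t _ ↦ (hg t).hasDerivWithinAt)
      fun t ht ↦ hM t (Ico_subset_Icc_self ht)
  calc ‖g 1 - g 0 - g' 0‖ ≤ ‖g 1 - g 0‖ + ‖g' 0‖ := norm_sub_le _ _
    _ ≤ M + M := add_le_add hinc (hM 0 (left_mem_Icc.2 zero_le_one))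
    _ = 2 * M := by ring

theorem norm_sub_sub_deriv_le_of_norm_deriv2_le {g g' g'' : ℝ → F} {M : ℝ}
    (hg : ∀ t, HasDerivAt g (g' t) t) (hg' : ∀ t, HasDerivAt g' (g'' t) t)
    (hM : ∀ t ∈ Icc (0 : ℝ) 1, ‖g'' t‖ ≤ M) :
    ‖g 1 - g 0 - g' 0‖ ≤ M := by
  have hM0 : 0 ≤ M := (norm_nonneg _).trans (hM 0 (left_mem_Icc.2 zero_le_one))
  have hg'_sub : ∀ t ∈ Icc (0 : ℝ) 1, ‖g' t - g' 0‖ ≤ M := fun t ht ↦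
    calc ‖g' t - g' 0‖ ≤ M * (t - 0) :=
          norm_image_sub_le_of_norm_deriv_le_segment' (fun s _ ↦ (hg' s).hasDerivWithinAt)
            (fun s hs ↦ hM s (Ico_subset_Icc_self hs)) t ht
      _ ≤ M * 1 := by gcongr; linarith [ht.2]
      _ = M := mul_one M
  have hrem : ∀ t, HasDerivAt (fun s ↦ g s - s • g' 0) (g' t - g' 0) t := fun t ↦ by
    have := (hg t).sub ((hasDerivAt_id t).smul_const (g' 0))
    rwa [one_smul] at this
  simpa [sub_right_comm] using norm_image_sub_le_of_norm_deriv_le_segment_01'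
    (fun t _ ↦ (hrem t).hasDerivWithinAt) fun t ht ↦ hg'_sub t (Ico_subset_Icc_self ht)

variable {E : Type*} [NormedAddCommGroup E] [NormedSpace ℝ E] {f : E → F} {a x : E}

theorem hasDerivAt_comp_add_smul {t : ℝ} (hf : DifferentiableAt ℝ f (a + t • x)) :
    HasDerivAt (fun s : ℝ ↦ f (a + s • x)) (fderiv ℝ f (a + t • x) x) t :=
  hf.hasFDerivAt.comp_hasDerivAt t (by simpa using ((hasDerivAt_id t).smul_const x).const_add a)

theorem norm_taylor_remainder_le_of_norm_fderiv_le {M : ℝ} (hf : Differentiable ℝ f)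
    (hM : ∀ t ∈ Icc (0 : ℝ) 1, ‖fderiv ℝ f (a + t • x)‖ ≤ M) :
    ‖f (a + x) - f a - fderiv ℝ f a x‖ ≤ 2 * M * ‖x‖ := by
  have := norm_sub_sub_deriv_le_two_mul (g := fun s ↦ f (a + s • x)) (M := M * ‖x‖)
    (fun t ↦ hasDerivAt_comp_add_smul (hf _))
    fun t ht ↦ ((fderiv ℝ f _).le_opNorm x).trans (by gcongr; exact hM t ht)
  simpa [mul_assoc] using this

theorem norm_taylor_remainder_le_of_norm_iteratedFDeriv_two_le {M : ℝ} (hf : ContDiff ℝ 2 f)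
    (hM : ∀ t ∈ Icc (0 : ℝ) 1, ‖iteratedFDeriv ℝ 2 f (a + t • x) ![x, x]‖ ≤ M) :
    ‖f (a + x) - f a - fderiv ℝ f a x‖ ≤ M := by
  have hf1 : Differentiable ℝ f := hf.differentiable (by norm_num)
  have hf2 : Differentiable ℝ (fderiv ℝ f) :=
    (hf.fderiv_right (m := 1) (by norm_num)).differentiable (by norm_num)
  have hderiv2 : ∀ t, HasDerivAt (fun s : ℝ ↦ fderiv ℝ f (a + s • x) x)
      (fderiv ℝ (fderiv ℝ f) (a + t • x) x x) t := fun t ↦ by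
    simpa using (hasDerivAt_comp_add_smul (hf2 _)).clm_apply (hasDerivAt_const t x)
  have := norm_sub_sub_deriv_le_of_norm_deriv2_le (g := fun s ↦ f (a + s • x))
    (fun t ↦ hasDerivAt_comp_add_smul (hf1 _)) hderiv2
    fun t ht ↦ by simpa [iteratedFDeriv_two_apply] using hM t ht
  simpa using this

end TaylorRemainder

section Weights

theorem norm_smul_le_of_mem_Icc {E : Type*} [SeminormedAddCommGroup E] [NormedSpace ℝ E]
    {t : ℝ} (ht : t ∈ Icc (0 : ℝ) 1) (x : E) : ‖t • x‖ ≤ ‖x‖ := by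
  rw [norm_smul, norm_of_nonneg ht.1]
  exact mul_le_of_le_one_left (norm_nonneg x) ht.2

variable {E : Type*} [SeminormedAddCommGroup E]

theorem one_add_sq_mul_norm_add_sq_le {ε C : ℝ} {a z x : E} (hε : 0 ≤ ε) (ha : ε * ‖a‖ ≤ C)
    (hz : ‖z‖ ≤ ‖x‖) :
    1 + ε ^ 2 * ‖a + z‖ ^ 2 ≤ (2 + 2 * C ^ 2) * (1 + ε ^ 2 * ‖x‖ ^ 2) := by
  have htri : ε * ‖a + z‖ ≤ ε * ‖a‖ + ε * ‖x‖ := by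
    rw [← mul_add]; gcongr; exact (norm_add_le a z).trans (by gcongr)
  have hCa : (ε * ‖a‖) ^ 2 ≤ C ^ 2 := pow_le_pow_left₀ (by positivity) ha 2
  nlinarith [sq_nonneg (ε * ‖a‖ - ε * ‖x‖), mul_nonneg hε (norm_nonneg (a + z)),
    sq_nonneg (ε * ‖x‖), mul_nonneg (sq_nonneg C) (sq_nonneg (ε * ‖x‖))]

theorem one_add_sq_mul_norm_add_sq_rpow_le {ε C s : ℝ} {a z x : E} (hε : 0 ≤ ε)
    (ha : ε * ‖a‖ ≤ C) (hz : ‖z‖ ≤ ‖x‖) (hs : 0 ≤ s) :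
    (1 + ε ^ 2 * ‖a + z‖ ^ 2) ^ s ≤ (2 + 2 * C ^ 2) ^ s * (1 + ε ^ 2 * ‖x‖ ^ 2) ^ s := by
  rw [← mul_rpow (by positivity) (by positivity)]
  exact rpow_le_rpow (by positivity) (one_add_sq_mul_norm_add_sq_le hε ha hz) hs

end Weights

theorem mul_one_add_sq_rpow_le (s r : ℝ) (hr : r ≤ 2) :
    s * (1 + s ^ 2) ^ ((r - 1) / 2) ≤ 1 + s ^ 2 * (1 + s ^ 2) ^ ((r - 2) / 2) := by
  set w := 1 + s ^ 2
  have hw : 1 ≤ w := le_add_of_nonneg_right (sq_nonneg s)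
  have hs : s ≤ w ^ (1 / 2 : ℝ) := by
    rw [← sqrt_eq_rpow]; exact (le_abs_self s).trans (abs_le_sqrt (by linarith))
  have hwq : w ^ ((r - 2) / 2) ≤ 1 := rpow_le_one_of_one_le_of_nonpos hw (by linarith)
  calc s * w ^ ((r - 1) / 2) ≤ w ^ (1 / 2 : ℝ) * w ^ ((r - 1) / 2) := by gcongr
    _ = w ^ ((r - 2) / 2) * w := by
        rw [← rpow_add (by positivity), ← rpow_add_one (by positivity)]; ring_nf
    _ = w ^ ((r - 2) / 2) + s ^ 2 * w ^ ((r - 2) / 2) := by ring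
    _ ≤ 1 + s ^ 2 * w ^ ((r - 2) / 2) := by gcongr

section WeightedTaylorRemainder

variable {E : Type*} [NormedAddCommGroup E] [NormedSpace ℝ E] {V : E → ℝ}
  {ε r C_V C_a : ℝ} {a : E}

theorem taylor_remainder_le_of_fderiv_weighted_bound (hε : 0 ≤ ε) (hCV : 0 ≤ C_V)
    (hr1 : 1 ≤ r) (hr2 : r ≤ 2) (hV : Differentiable ℝ V)
    (hgrad : ∀ y, ‖fderiv ℝ V y‖ ≤ C_V * ε * (1 + ε ^ 2 * ‖y‖ ^ 2) ^ ((r - 1) / 2))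
    (ha : ε * ‖a‖ ≤ C_a) (x : E) :
    V (a + x) - V a - fderiv ℝ V a x ≤ 2 * C_V * (2 + 2 * C_a ^ 2) ^ ((r - 1) / 2) *
      (1 + ε ^ 2 * ‖x‖ ^ 2 * (1 + ε ^ 2 * ‖x‖ ^ 2) ^ ((r - 2) / 2)) := by
  set K := 2 + 2 * C_a ^ 2
  have hM : ∀ t ∈ Icc (0 : ℝ) 1, ‖fderiv ℝ V (a + t • x)‖ ≤
      C_V * ε * (K ^ ((r - 1) / 2) * (1 + ε ^ 2 * ‖x‖ ^ 2) ^ ((r - 1) / 2)) := fun t ht ↦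
    (hgrad _).trans <| by
      gcongr
      exact one_add_sq_mul_norm_add_sq_rpow_le hε ha (norm_smul_le_of_mem_Icc ht x) (by linarith)
  rw [← mul_pow]
  calc V (a + x) - V a - fderiv ℝ V a x ≤ ‖V (a + x) - V a - fderiv ℝ V a x‖ := le_norm_self _
    _ ≤ 2 * (C_V * ε * (K ^ ((r - 1) / 2) * (1 + ε ^ 2 * ‖x‖ ^ 2) ^ ((r - 1) / 2))) * ‖x‖ :=
        norm_taylor_remainder_le_of_norm_fderiv_le hV hM
    _ = 2 * C_V * K ^ ((r - 1) / 2) * (ε * ‖x‖ * (1 + (ε * ‖x‖) ^ 2) ^ ((r - 1) / 2)) := by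
        rw [mul_pow]; ring
    _ ≤ _ := by gcongr; exact mul_one_add_sq_rpow_le _ _ hr2

theorem taylor_remainder_le_of_hessian_weighted_bound (hε : 0 ≤ ε) (hCV : 0 ≤ C_V)
    (hr2 : 2 ≤ r) (hV : ContDiff ℝ 2 V)
    (hHess : ∀ y ξ, |iteratedFDeriv ℝ 2 V y ![ξ, ξ]| ≤
      C_V * ε ^ 2 * (1 + ε ^ 2 * ‖y‖ ^ 2) ^ ((r - 2) / 2) * ‖ξ‖ ^ 2)
    (ha : ε * ‖a‖ ≤ C_a) (x : E) :
    V (a + x) - V a - fderiv ℝ V a x ≤ 2 * C_V * (2 + 2 * C_a ^ 2) ^ ((r - 1) / 2) *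
      (1 + ε ^ 2 * ‖x‖ ^ 2 * (1 + ε ^ 2 * ‖x‖ ^ 2) ^ ((r - 2) / 2)) := by
  set K := 2 + 2 * C_a ^ 2
  set X := ε ^ 2 * ‖x‖ ^ 2 * (1 + ε ^ 2 * ‖x‖ ^ 2) ^ ((r - 2) / 2)
  have hM : ∀ t ∈ Icc (0 : ℝ) 1, ‖iteratedFDeriv ℝ 2 V (a + t • x) ![x, x]‖ ≤
      C_V * ε ^ 2 * (K ^ ((r - 2) / 2) * (1 + ε ^ 2 * ‖x‖ ^ 2) ^ ((r - 2) / 2)) * ‖x‖ ^ 2 :=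
    fun t ht ↦ (hHess _ x).trans <| by
      gcongr
      exact one_add_sq_mul_norm_add_sq_rpow_le hε ha (norm_smul_le_of_mem_Icc ht x) (by linarith)
  have hK : K ^ ((r - 2) / 2) ≤ K ^ ((r - 1) / 2) :=
    rpow_le_rpow_of_exponent_le (by simp only [K]; nlinarith [sq_nonneg C_a]) (by linarith)
  calc V (a + x) - V a - fderiv ℝ V a x ≤ ‖V (a + x) - V a - fderiv ℝ V a x‖ := le_norm_self _
    _ ≤ C_V * ε ^ 2 * (K ^ ((r - 2) / 2) * (1 + ε ^ 2 * ‖x‖ ^ 2) ^ ((r - 2) / 2)) * ‖x‖ ^ 2 :=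
        norm_taylor_remainder_le_of_norm_iteratedFDeriv_two_le hV hM
    _ = C_V * K ^ ((r - 2) / 2) * X := by ring
    _ ≤ C_V * K ^ ((r - 1) / 2) * (1 + X) := by gcongr; linarith
    _ ≤ 2 * C_V * K ^ ((r - 1) / 2) * (1 + X) := by
        have : 0 ≤ C_V * K ^ ((r - 1) / 2) * (1 + X) := by positivity
        linarith

end WeightedTaylorRemainder

theorem stmt_8_general (d : ℕ) (ε r C_V C_a : ℝ) (hε : 0 < ε) (hr : 1 ≤ r)
    (hCV : 0 < C_V)
    (V : EuclideanSpace ℝ (Fin d) → ℝ) (hV : ContDiff ℝ 2 V)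
    (hgrad : ∀ x : EuclideanSpace ℝ (Fin d),
      ‖gradient V x‖ ≤ C_V * ε * (1 + ε ^ 2 * ‖x‖ ^ 2) ^ ((r - 1) / 2))
    (hHess : ∀ x ξ : EuclideanSpace ℝ (Fin d),
      |iteratedFDeriv ℝ 2 V x ![ξ, ξ]| ≤
        C_V * ε ^ 2 * (1 + ε ^ 2 * ‖x‖ ^ 2) ^ ((r - 2) / 2) * ‖ξ‖ ^ 2) :
    ∀ a : EuclideanSpace ℝ (Fin d), ε * ‖a‖ ≤ C_a →
    ∀ x : EuclideanSpace ℝ (Fin d),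
      V (x + a) - V a - fderiv ℝ V a x ≤
        (2 * C_V * (2 + 2 * C_a ^ 2) ^ ((r - 1) / 2)) *
          (1 + ε ^ 2 * ‖x‖ ^ 2 * (1 + ε ^ 2 * ‖x‖ ^ 2) ^ ((r - 2) / 2)) := by
  intro a ha x
  have hfderiv : ∀ y, ‖fderiv ℝ V y‖ ≤ C_V * ε * (1 + ε ^ 2 * ‖y‖ ^ 2) ^ ((r - 1) / 2) :=
    fun y ↦ by rw [← toDual_gradient, LinearIsometryEquiv.norm_map]; exact hgrad y
  rw [add_comm x a]
  rcases le_total r 2 with hr2 | hr2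
  · exact taylor_remainder_le_of_fderiv_weighted_bound hε.le hCV.le hr hr2
      (hV.differentiable (by norm_num)) hfderiv ha x
  · exact taylor_remainder_le_of_hessian_weighted_bound hε.le hCV.le hr2 hV hHess ha x

/-- Lemma B.5 (lem:VRup2): for `r ≥ 1`, a `C²` potential `V` on `ℝ^d` with
`|∇V(x)| ≤ C_V ε (1+ε²|x|²)^((r−1)/2)` and
`|ξ·(Hess V(x))ξ| ≤ C_V ε² (1+ε²|x|²)^((r−2)/2)|ξ|²`, and `a` with `ε|a| ≤ C_a`,
the Taylor remainder satisfies
`V(x+a) − V(a) − ∇V(a)·x ≤ C₁ (1 + ε²|x|² (1+ε²|x|²)^((r−2)/2))`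
with `C₁ = 2 C_V (2+2C_a²)^((r−1)/2)`. -/
theorem stmt_8 (d : ℕ) (hd : 1 ≤ d) (ε r C_V C_a : ℝ) (hε : 0 < ε) (hr : 1 ≤ r)
    (hCV : 0 < C_V) (hCa : 0 < C_a)
    (V : EuclideanSpace ℝ (Fin d) → ℝ) (hV : ContDiff ℝ 2 V)
    (hgrad : ∀ x : EuclideanSpace ℝ (Fin d),
      ‖gradient V x‖ ≤ C_V * ε * (1 + ε ^ 2 * ‖x‖ ^ 2) ^ ((r - 1) / 2))
    (hHess : ∀ x ξ : EuclideanSpace ℝ (Fin d),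
      |iteratedFDeriv ℝ 2 V x ![ξ, ξ]| ≤
        C_V * ε ^ 2 * (1 + ε ^ 2 * ‖x‖ ^ 2) ^ ((r - 2) / 2) * ‖ξ‖ ^ 2) :
    ∀ a : EuclideanSpace ℝ (Fin d), ε * ‖a‖ ≤ C_a →
    ∀ x : EuclideanSpace ℝ (Fin d),
      V (x + a) - V a - fderiv ℝ V a x ≤
        (2 * C_V * (2 + 2 * C_a ^ 2) ^ ((r - 1) / 2)) *
          (1 + ε ^ 2 * ‖x‖ ^ 2 * (1 + ε ^ 2 * ‖x‖ ^ 2) ^ ((r - 2) / 2)) :=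
  stmt_8_general d ε r C_V C_a hε hr hCV V hV hgrad hHess
end

section
/- For every real r ≥ 2, every real X > 0 and every real A, one has ∫₀¹ (1−θ) |A + Xθ|^(r−2) dθ ≥ X^(r−2) / (2^(r−2) · r · (r−1)). -/
/-!
Write `g(θ) = |A + Xθ|^r`. Since `g'' = r(r-1)X²|A + Xθ|^(r-2)`, Taylor's formula with integral
remainder identifies the integral with `(g(1) - g(0) - g'(0)) / (r(r-1)X²)`. To bound the
numerator `|A + X|^r - |A|^r - rXφ(A)` below by `2^(2-r) X^r`, where `φ(y) = |y|^(r-2) y`,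
differentiate in `X`: it suffices that `φ(u) - φ(v) ≥ 2^(2-r) (u - v)^(r-1)` for `v ≤ u`. This
follows from superadditivity of `t ↦ t^(r-1)` when `u` and `v` have the same sign, and from the
power-mean inequality when they do not.
-/

open Real

theorem abs_rpow_sub_two_mul_self_of_nonneg {r x : ℝ} (hr : r ≠ 1) (hx : 0 ≤ x) :
    |x| ^ (r - 2) * x = x ^ (r - 1) := by
  rw [abs_of_nonneg hx]
  rcases hx.eq_or_lt with rfl | hx
  · rw [mul_zero, zero_rpow (sub_ne_zero.2 hr)]
  · rw [← rpow_add_one hx.ne']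
    ring_nf

theorem hasDerivAt_abs_rpow_sub_two_mul_self {r : ℝ} (hr : 2 ≤ r) (x : ℝ) :
    HasDerivAt (fun y => |y| ^ (r - 2) * y) ((r - 1) * |x| ^ (r - 2)) x := by
  rcases eq_or_ne x 0 with rfl | hx
  · have hval : (r - 1) * |(0 : ℝ)| ^ (r - 2) = |(0 : ℝ)| ^ (r - 2) := by
      rcases hr.eq_or_lt with rfl | hr
      · norm_num
      · rw [abs_zero, zero_rpow (by linarith), mul_zero]
    rw [hasDerivAt_iff_tendsto_slope, hval]
    refine (((continuous_abs.rpow_const fun _ => Or.inr (by linarith)).tendsto 0).mono_left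
      nhdsWithin_le_nhds).congr' ?_
    filter_upwards [self_mem_nhdsWithin] with y (hy : y ≠ 0)
    simp [slope_def_field, hy]
  · have h : HasDerivAt (fun y => |y| ^ (r - 2) * y) _ x :=
      ((hasDerivAt_abs hx).rpow_const (p := r - 2) (Or.inl (abs_ne_zero.2 hx))).mul
        (hasDerivAt_id x)
    convert h using 1
    rw [rpow_sub_one (abs_ne_zero.2 hx),
      show (SignType.sign x : ℝ) * (r - 2) * (|x| ^ (r - 2) / |x|) * x
        = (r - 2) * |x| ^ (r - 2) * ((SignType.sign x : ℝ) * x / |x|) by ring,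
      sign_mul_self, div_self (abs_ne_zero.2 hx)]
    ring

theorem rpow_sub_le_abs_rpow_mul_self_sub_of_nonneg {r u v : ℝ} (hr : 2 ≤ r) (hv : 0 ≤ v)
    (hvu : v ≤ u) : (u - v) ^ (r - 1) ≤ |u| ^ (r - 2) * u - |v| ^ (r - 2) * v := by
  have hr1 : r ≠ 1 := by linarith
  rw [abs_rpow_sub_two_mul_self_of_nonneg hr1 hv,
    abs_rpow_sub_two_mul_self_of_nonneg hr1 (hv.trans hvu)]
  have := add_rpow_le_rpow_add hv (sub_nonneg.2 hvu) (by linarith : 1 ≤ r - 1)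
  rw [add_sub_cancel] at this
  linarith

theorem two_rpow_mul_add_rpow_le_rpow_add_rpow {p a b : ℝ} (hp : 1 ≤ p) (ha : 0 ≤ a)
    (hb : 0 ≤ b) : 2 ^ (1 - p) * (a + b) ^ p ≤ a ^ p + b ^ p := by
  lift a to NNReal using ha
  lift b to NNReal using hb
  have h := NNReal.rpow_add_le_mul_rpow_add_rpow a b hp
  have h2 : (2 : ℝ) ^ (1 - p) * 2 ^ (p - 1) = 1 := by
    rw [← rpow_add two_pos, show 1 - p + (p - 1) = 0 by ring, rpow_zero]
  calc (2 : ℝ) ^ (1 - p) * ((a : ℝ) + b) ^ p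
      ≤ 2 ^ (1 - p) * (2 ^ (p - 1) * ((a : ℝ) ^ p + (b : ℝ) ^ p)) := by
        gcongr; exact_mod_cast h
    _ = a ^ p + b ^ p := by rw [← mul_assoc, h2, one_mul]

theorem two_rpow_mul_rpow_sub_le_abs_rpow_mul_self_sub {r u v : ℝ} (hr : 2 ≤ r)
    (hvu : v ≤ u) :
    2 ^ (2 - r) * (u - v) ^ (r - 1) ≤ |u| ^ (r - 2) * u - |v| ^ (r - 2) * v := by
  have h2 : (2 : ℝ) ^ (2 - r) ≤ 1 := rpow_le_one_of_one_le_of_nonpos one_le_two (by linarith)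
  have hweak : 2 ^ (2 - r) * (u - v) ^ (r - 1) ≤ (u - v) ^ (r - 1) :=
    mul_le_of_le_one_left (rpow_nonneg (sub_nonneg.2 hvu) _) h2
  rcases le_total 0 v with hv | hv
  · exact hweak.trans (rpow_sub_le_abs_rpow_mul_self_sub_of_nonneg hr hv hvu)
  rcases le_total u 0 with hu | hu
  · have h := rpow_sub_le_abs_rpow_mul_self_sub_of_nonneg hr (neg_nonneg.2 hu) (neg_le_neg hvu)
    simp only [abs_neg, neg_sub_neg, mul_neg] at h
    linarith
  · have h :=
      two_rpow_mul_add_rpow_le_rpow_add_rpow (by linarith : 1 ≤ r - 1) hu (neg_nonneg.2 hv)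
    have hr1 : r ≠ 1 := by linarith
    rw [← abs_rpow_sub_two_mul_self_of_nonneg hr1 hu,
      ← abs_rpow_sub_two_mul_self_of_nonneg hr1 (neg_nonneg.2 hv), abs_neg, ← sub_eq_add_neg,
      show 1 - (r - 1) = 2 - r by ring] at h
    linarith

theorem hasDerivAt_const_add_mul (A X t : ℝ) : HasDerivAt (fun s => A + X * s) X t := by
  simpa using ((hasDerivAt_id t).const_mul X).const_add A

theorem integral_one_sub_mul_eq_sub_sub {g g' g'' : ℝ → ℝ}
    (hg : ∀ θ ∈ Set.Icc (0 : ℝ) 1, HasDerivAt g (g' θ) θ)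
    (hg' : ∀ θ ∈ Set.Icc (0 : ℝ) 1, HasDerivAt g' (g'' θ) θ)
    (hint : IntervalIntegrable (fun θ => (1 - θ) * g'' θ) MeasureTheory.volume 0 1) :
    ∫ θ in (0 : ℝ)..1, (1 - θ) * g'' θ = g 1 - g 0 - g' 0 := by
  have hH : ∀ θ ∈ Set.uIcc (0 : ℝ) 1,
      HasDerivAt (fun θ => (1 - θ) * g' θ + g θ) ((1 - θ) * g'' θ) θ := by
    intro θ hθ
    rw [Set.uIcc_of_le zero_le_one] at hθ
    have h : HasDerivAt (fun θ => (1 - θ) * g' θ + g θ) _ θ :=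
      (((hasDerivAt_id θ).const_sub 1).mul (hg' θ hθ)).add (hg θ hθ)
    convert h using 1
    simp only [id_eq]
    ring
  rw [intervalIntegral.integral_eq_sub_of_hasDerivAt hH hint]
  ring

theorem two_rpow_mul_rpow_le_abs_add_rpow_sub {r X A : ℝ} (hr : 2 ≤ r) (hX : 0 ≤ X) :
    2 ^ (2 - r) * X ^ r ≤ |A + X| ^ r - |A| ^ r - r * |A| ^ (r - 2) * A * X := by
  set G : ℝ → ℝ := fun t =>
    |A + X * t| ^ r - r * |A| ^ (r - 2) * A * X * t - 2 ^ (2 - r) * X ^ r * t ^ r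
  have hG : ∀ t, HasDerivAt G (r * |A + X * t| ^ (r - 2) * (A + X * t) * X
      - r * |A| ^ (r - 2) * A * X - 2 ^ (2 - r) * X ^ r * (r * t ^ (r - 1))) t := by
    intro t
    exact (((hasDerivAt_abs_rpow _ (by linarith)).comp t (hasDerivAt_const_add_mul A X t)).sub
      ((hasDerivAt_id t).const_mul _ |>.congr_deriv (mul_one _))).sub
      ((hasDerivAt_rpow_const (Or.inr (by linarith))).const_mul _)
  have hG' : ∀ t ∈ interior (Set.Icc (0 : ℝ) 1),
      0 ≤ r * |A + X * t| ^ (r - 2) * (A + X * t) * X - r * |A| ^ (r - 2) * A * X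
        - 2 ^ (2 - r) * X ^ r * (r * t ^ (r - 1)) := by
    intro t ht
    rw [interior_Icc] at ht
    have h := two_rpow_mul_rpow_sub_le_abs_rpow_mul_self_sub hr
      (le_add_of_nonneg_right (mul_nonneg hX ht.1.le) : A ≤ A + X * t)
    rw [add_sub_cancel_left, mul_rpow hX ht.1.le] at h
    have hXr : X ^ r = X * X ^ (r - 1) := by
      rw [← rpow_one_add' hX (by linarith), add_sub_cancel]
    rw [hXr]
    linarith [mul_le_mul_of_nonneg_left h (by positivity : 0 ≤ r * X)]
  have hmono : MonotoneOn G (Set.Icc 0 1) :=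
    monotoneOn_of_hasDerivWithinAt_nonneg (convex_Icc 0 1)
      (fun t _ => (hG t).continuousAt.continuousWithinAt)
      (fun t _ => (hG t).hasDerivWithinAt) hG'
  have h01 :=
    hmono (Set.left_mem_Icc.2 zero_le_one) (Set.right_mem_Icc.2 zero_le_one) zero_le_one
  simp only [G, mul_zero, add_zero, mul_one, one_rpow, zero_rpow (by linarith : r ≠ 0)] at h01
  linarith

theorem integral_one_sub_mul_abs_const_add_mul_rpow {r X : ℝ} (hr : 2 ≤ r) (hX : X ≠ 0)
    (A : ℝ) :
    ∫ θ in (0 : ℝ)..1, (1 - θ) * |A + X * θ| ^ (r - 2)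
      = (|A + X| ^ r - |A| ^ r - r * |A| ^ (r - 2) * A * X) / (r * (r - 1) * X ^ 2) := by
  have hc : r * (r - 1) * X ^ 2 ≠ 0 := by
    have : r - 1 ≠ 0 := by linarith
    have : r ≠ 0 := by linarith
    positivity
  have hint : IntervalIntegrable (fun θ => (1 - θ) * |A + X * θ| ^ (r - 2))
      MeasureTheory.volume 0 1 :=
    ((continuous_const.sub continuous_id).mul
      ((continuous_const.add (continuous_const.mul continuous_id)).abs.rpow_const
        fun _ => Or.inr (by linarith))).intervalIntegrable 0 1
  have hscale : ∀ θ, (1 - θ) * (r * ((r - 1) * |A + X * θ| ^ (r - 2) * X) * X)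
      = r * (r - 1) * X ^ 2 * ((1 - θ) * |A + X * θ| ^ (r - 2)) := fun θ => by ring
  have htaylor := integral_one_sub_mul_eq_sub_sub
    (g := fun θ => |A + X * θ| ^ r)
    (g' := fun θ => r * (|A + X * θ| ^ (r - 2) * (A + X * θ)) * X)
    (fun θ _ => by
      simpa only [Function.comp_def, mul_assoc] using
        (hasDerivAt_abs_rpow _ (by linarith)).comp θ (hasDerivAt_const_add_mul A X θ))
    (fun θ _ => by
      simpa only [Function.comp_def] using
        (((hasDerivAt_abs_rpow_sub_two_mul_self hr _).comp θ
          (hasDerivAt_const_add_mul A X θ)).const_mul r).mul_const X)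
    (by simpa only [hscale] using hint.const_mul (r * (r - 1) * X ^ 2))
  simp only [hscale, intervalIntegral.integral_const_mul, mul_zero, add_zero, mul_one] at htaylor
  rw [eq_div_iff hc, mul_comm, htaylor]
  ring

/-- The integral estimate (eq:I21) of Appendix A: for `r ≥ 2`, `X > 0` and any real `A`,
`∫₀¹ (1−θ)|A + Xθ|^(r−2) dθ ≥ X^(r−2)/(2^(r−2) r (r−1))`. -/
theorem stmt_12 (r X A : ℝ) (hr : 2 ≤ r) (hX : 0 < X) :
    X ^ (r - 2) / ((2 : ℝ) ^ (r - 2) * r * (r - 1)) ≤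
      ∫ θ in (0 : ℝ)..1, (1 - θ) * |A + X * θ| ^ (r - 2) := by
  have hc : 0 < r * (r - 1) * X ^ 2 := by
    have : 0 < r - 1 := by linarith
    positivity
  calc X ^ (r - 2) / ((2 : ℝ) ^ (r - 2) * r * (r - 1))
      = 2 ^ (2 - r) * X ^ r / (r * (r - 1) * X ^ 2) := by
        rw [rpow_sub hX, rpow_two, ← neg_sub, rpow_neg zero_le_two]
        field_simp
    _ ≤ (|A + X| ^ r - |A| ^ r - r * |A| ^ (r - 2) * A * X) / (r * (r - 1) * X ^ 2) :=
        div_le_div_of_nonneg_right (two_rpow_mul_rpow_le_abs_add_rpow_sub hr hX.le) hc.le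
    _ = ∫ θ in (0 : ℝ)..1, (1 - θ) * |A + X * θ| ^ (r - 2) :=
        (integral_one_sub_mul_abs_const_add_mul_rpow hr hX.ne' A).symm
end
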